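/- arXiv:1609.01002 — 2 statements merged into one kernel-verified Lean document; each statement's English description precedes it below -/
import Mathlib

section
/- If the sequence of row positions of a robber of speed R and a pursuing line of cops satisfies the recurrence analysis of Proposition 3.1, then the inequality L ≥ n(R−1)/(2R−1) + 2 together with x¹_c − x⁰_c ≥ (x¹_r − x⁰_r)/R − 1, x¹_r > x¹_c + L, x⁰_r ≤ x⁰_c + R, and x¹_c − x⁰_c < n − 2L leads to a contradiction; formally: there do not exist reals x⁰_c, x⁰_r, x¹_c, x¹_r with x⁰_c ≤ x⁰_r ≤ x⁰_c + R, x¹_r > x¹_c + L, x¹_c − x⁰_c ≥ (x¹_r − x⁰_r)/R − 1 and x¹_c − x⁰_c < n − 2L, when R ≥ 2, n > 0 and L ≥ n(R−1)/(2R−1) + 2. -/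
/-!
Write `a = x¹_c - x⁰_c` for the advance of the cops. The robber ends more than `L` ahead of the
cops and started at most `R` ahead, so he travelled more than `L + a - R`; the speed bound
`a ≥ (x¹_r - x⁰_r)/R - 1` then forces `a (R - 1) > L - 2R`. On the other hand `a < n - 2L`
gives `a (R - 1) ≤ (n - 2L)(R - 1)`, and the choice of `L` makes this at most `L - 2R`.
-/

lemma sub_two_mul_lt_advance_mul_sub_one {R L x0c x0r x1c x1r : ℝ} (hR : 0 < R)
    (hstart : x0r ≤ x0c + R) (hend : x1c + L < x1r)
    (hspeed : (x1r - x0r) / R - 1 ≤ x1c - x0c) :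
    L - 2 * R < (x1c - x0c) * (R - 1) := by
  have hdist : x1r - x0r ≤ (x1c - x0c + 1) * R := (div_le_iff₀ hR).mp (by linarith)
  linarith

lemma advance_mul_sub_one_le {R n L a : ℝ} (hR : 1 ≤ R)
    (hL : n * (R - 1) / (2 * R - 1) + 2 ≤ L) (ha : a < n - 2 * L) :
    a * (R - 1) ≤ L - 2 * R := by
  have hL' : n * (R - 1) ≤ (L - 2) * (2 * R - 1) := (div_le_iff₀ (by linarith)).mp (by linarith)
  calc a * (R - 1) ≤ (n - 2 * L) * (R - 1) := by gcongr
    _ ≤ L - 2 * R := by nlinarith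

theorem stmt_12_general (R : ℕ) (hR : 2 ≤ R) (n L : ℝ)
    (hL : L ≥ n * ((R : ℝ) - 1) / (2 * (R : ℝ) - 1) + 2) :
    ¬ ∃ x0c x0r x1c x1r : ℝ,
        x0c ≤ x0r ∧ x0r ≤ x0c + R ∧ x1r > x1c + L ∧
        x1c - x0c ≥ (x1r - x0r) / R - 1 ∧ x1c - x0c < n - 2 * L := by
  rintro ⟨x0c, x0r, x1c, x1r, -, hstart, hend, hspeed, hadvance⟩
  have hR1 : (1 : ℝ) ≤ R := by exact_mod_cast one_le_two.trans hR
  exact (advance_mul_sub_one_le hR1 hL hadvance).not_gt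
    (sub_two_mul_lt_advance_mul_sub_one (by linarith) hstart hend hspeed)

theorem stmt_12 (R : ℕ) (hR : 2 ≤ R) (n L : ℝ) (hn : 0 < n)
    (hL : L ≥ n * ((R : ℝ) - 1) / (2 * (R : ℝ) - 1) + 2) :
    ¬ ∃ x0c x0r x1c x1r : ℝ,
        x0c ≤ x0r ∧ x0r ≤ x0c + R ∧ x1r > x1c + L ∧
        x1c - x0c ≥ (x1r - x0r) / R - 1 ∧ x1c - x0c < n - 2 * L :=
  stmt_12_general R hR n L hL
end

section
/- In a 9×9 array of N×N grids forming an 18N-wide region (the union of two vertically adjacent 1-cells, each a 9×9 array of N×N grids), between any N×N subgrid P in the lower 1-cell and any N×N subgrid Q in the upper 1-cell there exist N pairwise vertex-disjoint paths, each of length at most 36N, contained in the union of the two 1-cells. -/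
/-- The grid graph on ℤ²: two squares are adjacent iff they share an edge. -/
def gridGraph : SimpleGraph (ℤ × ℤ) where
  Adj p q := |p.1 - q.1| + |p.2 - q.2| = 1
  symm := by constructor; intro p q (h : |p.1 - q.1| + |p.2 - q.2| = 1); rw [abs_sub_comm p.1, abs_sub_comm p.2] at h; exact h
  loopless := by constructor; intro p h; simp at h

/-- The N×N cell with index pair (a, b), in a tiling of ℤ² by N×N cells. -/
def cell (N : ℕ) (a b : ℤ) : Set (ℤ × ℤ) :=
  {p | a * N ≤ p.1 ∧ p.1 < (a + 1) * N ∧ b * N ≤ p.2 ∧ p.2 < (b + 1) * N}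

/-!
Path `i` climbs from the `i`-th square of the bottom row of `P` straight up to row `c i` of `Q`
and then runs horizontally to the `i`-th column of `Q`. Such an L-shaped walk is a geodesic of the
grid, hence a path, of length less than `26 N`. Taking the turning rows `c i` decreasing in `i`
when the paths run to the right (increasing when they run to the left) keeps them disjoint.
-/

open SimpleGraph

namespace gridGraph

theorem manhattan_le_length {u v : ℤ × ℤ} (w : gridGraph.Walk u v) :
    |u.1 - v.1| + |u.2 - v.2| ≤ w.length := by
  induction w with
  | nil => simp
  | @cons u v x hadj w ih =>
    have hadj : |u.1 - v.1| + |u.2 - v.2| = 1 := hadj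
    rw [Walk.length_cons, Nat.cast_succ]
    linarith [abs_sub_le u.1 v.1 x.1, abs_sub_le u.2 v.2 x.2]

theorem isPath_of_length_le_manhattan {u v : ℤ × ℤ} (w : gridGraph.Walk u v)
    (hw : (w.length : ℤ) ≤ |u.1 - v.1| + |u.2 - v.2|) : w.IsPath := by
  rw [← w.bypass_eq_self_of_length_le_length_bypass]
  · exact w.bypass_isPath
  · have := manhattan_le_length w.bypass
    omega

theorem exists_walk_straight (p d : ℤ × ℤ) (hd : |d.1| + |d.2| = 1) (n : ℕ) :
    ∃ w : gridGraph.Walk p (p + n • d), w.length = n ∧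
      ∀ q ∈ w.support, ∃ k ≤ n, q = p + k • d := by
  induction n generalizing p with
  | zero => exact ⟨Walk.nil.copy rfl (by simp), by simp, by simp⟩
  | succ n ih =>
    obtain ⟨w, hlen, hsupp⟩ := ih (p + d)
    have hadj : gridGraph.Adj p (p + d) := by
      change |p.1 - (p.1 + d.1)| + |p.2 - (p.2 + d.2)| = 1
      simpa using hd
    refine ⟨(Walk.cons hadj w).copy rfl (by rw [succ_nsmul', add_assoc]), by simp [hlen], ?_⟩
    intro q hq
    rw [Walk.support_copy, Walk.support_cons, List.mem_cons] at hq
    rcases hq with rfl | hq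
    · exact ⟨0, by omega, by simp⟩
    · obtain ⟨k, hk, rfl⟩ := hsupp q hq
      exact ⟨k + 1, by omega, by rw [succ_nsmul', add_assoc]⟩

theorem exists_walk_vertical (x y y' : ℤ) (hy : y ≤ y') :
    ∃ w : gridGraph.Walk (x, y) (x, y'), (w.length : ℤ) = y' - y ∧
      ∀ q ∈ w.support, q.1 = x ∧ y ≤ q.2 ∧ q.2 ≤ y' := by
  obtain ⟨w, hlen, hsupp⟩ := exists_walk_straight (x, y) (0, 1) (by norm_num) (y' - y).toNat
  refine ⟨w.copy rfl (by ext <;> simp only [Prod.smul_mk, Int.nsmul_eq_mul, Prod.mk_add_mk, mul_zero, mul_one, add_zero]; omega), ?_, ?_⟩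
  · rw [Walk.length_copy, hlen]
    omega
  · intro q hq
    rw [Walk.support_copy] at hq
    obtain ⟨k, hk, rfl⟩ := hsupp q hq
    simp only [Prod.smul_mk, Int.nsmul_eq_mul, Prod.mk_add_mk, mul_zero, mul_one, add_zero,
      true_and]
    omega

theorem exists_walk_horizontal (x x' y : ℤ) :
    ∃ w : gridGraph.Walk (x, y) (x', y), (w.length : ℤ) = |x' - x| ∧
      ∀ q ∈ w.support, q.2 = y ∧ min x x' ≤ q.1 ∧ q.1 ≤ max x x' := by
  wlog hx : x ≤ x' generalizing x x'
  · obtain ⟨w, hlen, hsupp⟩ := this x' x (by omega)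
    refine ⟨w.reverse, by rw [Walk.length_reverse, hlen, abs_sub_comm], ?_⟩
    intro q hq
    rw [Walk.support_reverse, List.mem_reverse] at hq
    rw [min_comm, max_comm]
    exact hsupp q hq
  obtain ⟨w, hlen, hsupp⟩ := exists_walk_straight (x, y) (1, 0) (by norm_num) (x' - x).toNat
  refine ⟨w.copy rfl (by ext <;> simp only [Prod.smul_mk, Int.nsmul_eq_mul, Prod.mk_add_mk, mul_zero, mul_one, add_zero]; omega), ?_, ?_⟩
  · rw [Walk.length_copy, hlen, abs_of_nonneg (by omega)]
    omega
  · intro q hq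
    rw [Walk.support_copy] at hq
    obtain ⟨k, hk, rfl⟩ := hsupp q hq
    simp only [Prod.smul_mk, Int.nsmul_eq_mul, Prod.mk_add_mk, mul_zero, mul_one, add_zero,
      true_and]
    omega

theorem exists_isPath_up_across (x y x' y' : ℤ) (hy : y ≤ y') :
    ∃ w : gridGraph.Walk (x, y) (x', y'), w.IsPath ∧ (w.length : ℤ) = y' - y + |x' - x| ∧
      ∀ q ∈ w.support,
        (q.1 = x ∧ y ≤ q.2 ∧ q.2 ≤ y') ∨ (q.2 = y' ∧ min x x' ≤ q.1 ∧ q.1 ≤ max x x') := by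
  obtain ⟨wv, hlenv, hsuppv⟩ := exists_walk_vertical x y y' hy
  obtain ⟨wh, hlenh, hsupph⟩ := exists_walk_horizontal x x' y'
  have hlen : ((wv.append wh).length : ℤ) = y' - y + |x' - x| := by
    rw [Walk.length_append]; push_cast; rw [hlenv, hlenh]
  refine ⟨wv.append wh, isPath_of_length_le_manhattan _ ?_, hlen, ?_⟩
  · rw [hlen, abs_sub_comm x, abs_of_nonpos (by omega : y - y' ≤ 0)]
    simp only
    omega
  · intro q hq
    rcases (Walk.mem_support_append_iff wv wh).mp hq with hq | hq
    · exact Or.inl (hsuppv q hq)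
    · exact Or.inr (hsupph q hq)

theorem exists_disjoint_paths_to_square_above (N : ℕ) (A B A' B' : ℤ) (hB : B ≤ B') :
    ∃ w : Fin N → (u : ℤ × ℤ) × (v : ℤ × ℤ) × gridGraph.Walk u v,
      (∀ i, (w i).2.2.IsPath) ∧
      (∀ i, (w i).1 = (A + i, B)) ∧
      (∀ i, (w i).2.1.1 = A' + i ∧ B' ≤ (w i).2.1.2 ∧ (w i).2.1.2 < B' + N) ∧
      (∀ i, ∀ p ∈ (w i).2.2.support,
        min A A' ≤ p.1 ∧ p.1 < max A A' + N ∧ B ≤ p.2 ∧ p.2 < B' + N) ∧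
      (∀ i, ((w i).2.2.length : ℤ) < |A' - A| + (B' - B) + N) ∧
      (∀ i j, i ≠ j → ∀ p ∈ (w i).2.2.support, p ∉ (w j).2.2.support) := by
  let c : Fin N → ℤ := fun i => if A ≤ A' then N - 1 - i else i
  have hc : ∀ i, 0 ≤ c i ∧ c i < N := fun i => by
    have := i.isLt
    unfold c; split_ifs <;> omega
  choose W hpath hlen hsupp using fun i : Fin N =>
    exists_isPath_up_across (A + i) B (A' + i) (B' + c i) (by linarith [hc i])
  refine ⟨fun i => ⟨_, _, W i⟩, hpath, fun i => rfl, fun i => ⟨rfl, by simp [hc i]⟩, ?_, ?_, ?_⟩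
  · intro i p hp
    have := hc i
    have := i.isLt
    rcases hsupp i p hp with h | h <;> omega
  · intro i
    have := hc i
    dsimp only
    rw [hlen i, show A' + i - (A + i) = A' - A by ring]
    omega
  -- A horizontal run only crosses the columns of paths that started ahead of it in its
  -- direction, and those turned in lower rows.
  · intro i j hij p hpi hpj
    have hij : (i : ℤ) ≠ j := by omega
    have := hc i
    have := hc j
    unfold c at *
    rcases hsupp i p hpi with hi | hi <;> rcases hsupp j p hpj with hj | hj <;>
      split_ifs at * <;> omega

end gridGraph

theorem stmt_17_general (N : ℕ) (a b a' b' : ℤ)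
    (ha : 0 ≤ a) (ha9 : a < 9) (hb : 0 ≤ b) (hb9 : b < 9)
    (ha' : 0 ≤ a') (ha9' : a' < 9) (hb' : 9 ≤ b') (hb18' : b' < 18) :
    ∃ w : Fin N → (u : ℤ × ℤ) × (v : ℤ × ℤ) × gridGraph.Walk u v,
      (∀ i, (w i).2.2.IsPath) ∧
      (∀ i, (w i).1 ∈ cell N a b) ∧
      (∀ i, (w i).2.1 ∈ cell N a' b') ∧
      (∀ i, ∀ p ∈ (w i).2.2.support,
        0 ≤ p.1 ∧ p.1 < 9 * N ∧ 0 ≤ p.2 ∧ p.2 < 18 * N) ∧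
      (∀ i, (w i).2.2.length ≤ 36 * N) ∧
      (∀ i j, i ≠ j → ∀ p ∈ (w i).2.2.support, p ∉ (w j).2.2.support) := by
  have hN0 : (0 : ℤ) ≤ N := N.cast_nonneg
  have hA : 0 ≤ a * N ∧ a * N + N ≤ 9 * N := ⟨by positivity, by nlinarith⟩
  have hA' : 0 ≤ a' * N ∧ a' * N + N ≤ 9 * N := ⟨by positivity, by nlinarith⟩
  have hB : 0 ≤ b * N ∧ b * N + N ≤ 9 * N := ⟨by positivity, by nlinarith⟩
  have hB' : 9 * N ≤ b' * N ∧ b' * N + N ≤ 18 * N := ⟨by nlinarith, by nlinarith⟩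
  obtain ⟨w, hpath, hstart, hend, hsupp, hlen, hdisj⟩ :=
    gridGraph.exists_disjoint_paths_to_square_above N (a * N) (b * N) (a' * N) (b' * N) (by omega)
  refine ⟨w, hpath, fun i => ?_, fun i => ?_, fun i p hp => ?_, fun i => ?_, hdisj⟩
  · have := i.isLt
    rw [hstart]
    simp only [cell, Set.mem_ofPred_eq, add_one_mul]
    omega
  · have := hend i
    simp only [cell, Set.mem_ofPred_eq, add_one_mul]
    omega
  · have := hsupp i p hp
    omega
  · have := hlen i
    have : |a' * N - a * N| ≤ 8 * N := abs_sub_le_iff.mpr ⟨by omega, by omega⟩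
    omega

theorem stmt_17 (N : ℕ) (hN : 0 < N) (a b a' b' : ℤ)
    (ha : 0 ≤ a) (ha9 : a < 9) (hb : 0 ≤ b) (hb9 : b < 9)
    (ha' : 0 ≤ a') (ha9' : a' < 9) (hb' : 9 ≤ b') (hb18' : b' < 18) :
    ∃ w : Fin N → (u : ℤ × ℤ) × (v : ℤ × ℤ) × gridGraph.Walk u v,
      (∀ i, (w i).2.2.IsPath) ∧
      (∀ i, (w i).1 ∈ cell N a b) ∧
      (∀ i, (w i).2.1 ∈ cell N a' b') ∧
      (∀ i, ∀ p ∈ (w i).2.2.support,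
        0 ≤ p.1 ∧ p.1 < 9 * N ∧ 0 ≤ p.2 ∧ p.2 < 18 * N) ∧
      (∀ i, (w i).2.2.length ≤ 36 * N) ∧
      (∀ i j, i ≠ j → ∀ p ∈ (w i).2.2.support, p ∉ (w j).2.2.support) :=
  stmt_17_general N a b a' b' ha ha9 hb hb9 ha' ha9' hb' hb18'
end
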